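/- arXiv:1503.04301 — 7 statements merged into one kernel-verified Lean document; each statement's English description precedes it below -/
import Mathlib

section
/- Let G be a finite group with abelian commutator subgroup G'. If the quotient G/(G'Z(G)) is cyclic, generated by aG'Z(G), then the map g ↦ [g,a] is a surjective homomorphism from G'Z(G) onto G' with kernel Z(G). -/
variable (G : Type*) [Group G]

/-- The subgroup of inner automorphisms of `G`. -/
def innAut : Subgroup (MulAut G) := (MulAut.conj (G := G)).range

/-- Central automorphisms: those commuting with every inner automorphism. -/
def Autcent : Subgroup (MulAut G) :=
  Subgroup.centralizer (innAut G : Set (MulAut G))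

/-- Automorphisms fixing the center elementwise. -/
def fixCenter : Subgroup (MulAut G) where
  carrier := {α | ∀ z ∈ Subgroup.center G, α z = z}
  one_mem' := fun _ _ => rfl
  mul_mem' := by
    intro a b ha hb z hz
    show a (b z) = z
    rw [hb z hz, ha z hz]
  inv_mem' := by
    intro a ha z hz
    show a⁻¹ z = z
    have h := ha z hz
    have : a.symm (a z) = a.symm z := by rw [h]
    simpa using this.symm

/-- Central automorphisms fixing the center elementwise. -/
def AutcentZ : Subgroup (MulAut G) := Autcent G ⊓ fixCenter G

/-- The center of the inner automorphism group, as a subgroup of `MulAut G`. -/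
def ZInn : Subgroup (MulAut G) :=
  innAut G ⊓ Subgroup.centralizer (innAut G : Set (MulAut G))

open scoped commutatorElement

/-!
For a normal abelian subgroup `H` with `G = ⟨a, H⟩`, the identity
`⁅g * h, a⁆ = g * ⁅h, a⁆ * g⁻¹ * ⁅g, a⁆` makes `h ↦ ⁅h, a⁆` a homomorphism on `H`. Its kernel
consists of the elements of `H` commuting with `a`, hence with every generator of `G`: it is
`H ∩ Z(G)`. Its image `D ≤ G'` is normalised by `a` (as `a * ⁅h, a⁆ * a⁻¹ = ⁅a * h * a⁻¹, a⁆`)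
and centralised by `H`, so it is normal, and modulo `D` the generators pairwise commute; thus
`G / D` is abelian and `D = G'`. The theorem is the case `H = G'Z(G)`, abelian because `G'` is.
-/

namespace Subgroup

variable {G}

theorem isMulCommutative_sup_center (H : Subgroup G) [IsMulCommutative H] :
    IsMulCommutative ↥(H ⊔ center G) :=
  le_centralizer_iff_isMulCommutative.mp <|
    sup_le (le_centralizer_iff.mp (sup_le (le_centralizer H) (center_le_centralizer _)))
      (center_le_centralizer _)

theorem mem_center_of_forall_commute {S : Set G} (hS : closure S = ⊤) {g : G}
    (h : ∀ s ∈ S, g * s = s * g) : g ∈ center G := by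
  rw [center_eq_iInf hS]
  exact mem_iInf.mpr fun s ↦ mem_iInf.mpr fun hs ↦ mem_centralizer_singleton_iff.mpr (h s hs)

theorem isMulCommutative_of_closure_eq_top {S : Set G} (hS : closure S = ⊤)
    (h : ∀ s ∈ S, ∀ t ∈ S, s * t = t * s) : IsMulCommutative G :=
  center_eq_top_iff.mp <| eq_top_iff.mpr <| hS ▸ (closure_le _).mpr fun s hs ↦
    mem_center_of_forall_commute hS (h s hs)

theorem commutator_le_of_closure_eq_top {D : Subgroup G} [D.Normal] {S : Set G}
    (hS : closure S = ⊤) (h : ∀ s ∈ S, ∀ t ∈ S, ⁅s, t⁆ ∈ D) : _root_.commutator G ≤ D := by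
  rw [← Normal.quotient_commutative_iff_commutator_le]
  refine isMulCommutative_of_closure_eq_top (S := QuotientGroup.mk' D '' S) ?_ ?_
  · rw [← MonoidHom.map_closure, hS, ← MonoidHom.range_eq_map, MonoidHom.range_eq_top]
    exact QuotientGroup.mk'_surjective D
  · rintro _ ⟨s, hs, rfl⟩ _ ⟨t, ht, rfl⟩
    rw [← commutatorElement_eq_one_iff_mul_comm, ← map_commutatorElement,
      QuotientGroup.mk'_apply, QuotientGroup.eq_one_iff]
    exact h s hs t ht

theorem commutatorElement_mem_left {H : Subgroup G} [H.Normal] {h : G} (hh : h ∈ H) (g : G) :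
    ⁅h, g⁆ ∈ H :=
  commutator_le_left H ⊤ (commutator_mem_commutator hh (mem_top g))

def commutatorElementHom (H : Subgroup G) [H.Normal] [IsMulCommutative H] (a : G) : H →* G where
  toFun h := ⁅(h : G), a⁆
  map_one' := commutatorElement_one_left a
  map_mul' g h := by
    have hg := commutatorElement_mem_left g.2 a
    have hh := commutatorElement_mem_left h.2 a
    calc ⁅(g : G) * h, a⁆ = g * ⁅(h : G), a⁆ * (g : G)⁻¹ * ⁅(g : G), a⁆ := by group
      _ = ⁅(h : G), a⁆ * ⁅(g : G), a⁆ := by rw [setLike_mul_comm g.2 hh]; group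
      _ = ⁅(g : G), a⁆ * ⁅(h : G), a⁆ := setLike_mul_comm hh hg

variable {H : Subgroup G} [H.Normal] [IsMulCommutative H] {a : G}

@[simp]
theorem commutatorElementHom_apply (h : H) : H.commutatorElementHom a h = ⁅(h : G), a⁆ := rfl

theorem commutatorElementHom_eq_one_iff (hgen : closure ({a} ∪ (H : Set G)) = ⊤) (h : H) :
    H.commutatorElementHom a h = 1 ↔ (h : G) ∈ center G := by
  rw [commutatorElementHom_apply, commutatorElement_eq_one_iff_mul_comm]
  refine ⟨fun ha ↦ mem_center_of_forall_commute hgen ?_, fun hz ↦ (mem_center_iff.mp hz a).symm⟩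
  rintro s (rfl | hs)
  · exact ha
  · exact setLike_mul_comm h.2 hs

theorem range_commutatorElementHom_le : (H.commutatorElementHom a).range ≤ H := by
  rintro _ ⟨h, rfl⟩
  exact commutatorElement_mem_left h.2 a

theorem mem_normalizer_range_commutatorElementHom :
    a ∈ normalizer ((H.commutatorElementHom a).range : Set G) := by
  refine mem_normalizer_iff.mpr fun d ↦ ⟨?_, ?_⟩
  · rintro ⟨h, rfl⟩
    exact ⟨⟨_, Normal.conj_mem ‹_› _ h.2 a⟩, by simp only [commutatorElementHom_apply]; group⟩
  · rintro ⟨h, hd⟩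
    refine ⟨⟨_, Normal.conj_mem ‹_› _ h.2 a⁻¹⟩, ?_⟩
    calc ⁅a⁻¹ * (h : G) * a⁻¹⁻¹, a⁆ = a⁻¹ * ⁅(h : G), a⁆ * a := by group
      _ = d := by rw [commutatorElementHom_apply] at hd; rw [hd]; group

theorem range_commutatorElementHom (hgen : closure ({a} ∪ (H : Set G)) = ⊤) :
    (H.commutatorElementHom a).range = _root_.commutator G := by
  refine le_antisymm ?_ ?_
  · rintro _ ⟨h, rfl⟩
    exact commutator_mem_commutator (mem_top _) (mem_top _)
  have : (H.commutatorElementHom a).range.Normal := by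
    rw [← normalizer_eq_top_iff, eq_top_iff, ← hgen, closure_le]
    refine Set.union_subset
      (Set.singleton_subset_iff.mpr mem_normalizer_range_commutatorElementHom) ?_
    exact (le_centralizer H).trans <|
      (centralizer_le range_commutatorElementHom_le).trans (centralizer_le_normalizer _)
  refine commutator_le_of_closure_eq_top hgen ?_
  rintro s (rfl | hs) t (rfl | ht)
  · rw [commutatorElement_self]; exact one_mem _
  · rw [← commutatorElement_inv]; exact inv_mem ⟨⟨t, ht⟩, rfl⟩
  · exact ⟨⟨s, hs⟩, rfl⟩
  · rw [commutatorElement_eq_one_iff_mul_comm.mpr (setLike_mul_comm hs ht)]; exact one_mem _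

end Subgroup

theorem stmt0_general {G : Type*} [Group G]
    (hG' : IsMulCommutative (commutator G)) (a : G)
    (hgen : Subgroup.closure ({a} ∪ (commutator G ⊔ Subgroup.center G : Subgroup G)) = ⊤) :
    ∃ f : ↥(commutator G ⊔ Subgroup.center G) →* G,
      (∀ g : ↥(commutator G ⊔ Subgroup.center G), f g = ⁅(g : G), a⁆) ∧
      (∀ y ∈ commutator G, ∃ g : ↥(commutator G ⊔ Subgroup.center G), f g = y) ∧
      (∀ g : ↥(commutator G ⊔ Subgroup.center G), f g = 1 ↔ (g : G) ∈ Subgroup.center G) := by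
  have := Subgroup.isMulCommutative_sup_center (commutator G)
  refine ⟨(commutator G ⊔ Subgroup.center G).commutatorElementHom a, fun _ ↦ rfl,
    fun y hy ↦ ?_, Subgroup.commutatorElementHom_eq_one_iff hgen⟩
  rwa [← Subgroup.range_commutatorElementHom hgen] at hy

/-- If `G` is a finite group with abelian commutator subgroup,
`G = ⟨a, G'Z(G)⟩` (so that `G/(G'Z(G))` is cyclic generated by `a`), then
`g ↦ ⁅g, a⁆` is a surjective homomorphism from `G'Z(G)` onto `G'` with kernel `Z(G)`. -/
theorem stmt0 {G : Type*} [Group G] [Finite G]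
    (hG' : IsMulCommutative (commutator G)) (a : G)
    (hgen : Subgroup.closure ({a} ∪ (commutator G ⊔ Subgroup.center G : Subgroup G)) = ⊤) :
    ∃ f : ↥(commutator G ⊔ Subgroup.center G) →* G,
      (∀ g : ↥(commutator G ⊔ Subgroup.center G), f g = ⁅(g : G), a⁆) ∧
      (∀ y ∈ commutator G, ∃ g : ↥(commutator G ⊔ Subgroup.center G), f g = y) ∧
      (∀ g : ↥(commutator G ⊔ Subgroup.center G), f g = 1 ↔ (g : G) ∈ Subgroup.center G) :=
  stmt0_general hG' a hgen
end

section
/- If G is a finite non-abelian p-group with abelian commutator subgroup G', then the quotient G/(G'Z(G)) is not cyclic. -/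
variable (G : Type*) [Group G]

/-!
If `G / G'Z(G)` is cyclic, then modulo `[G', G]` the subgroup `G'Z(G)` becomes central with cyclic
quotient, so `G / [G', G]` is abelian: `G' = [G', G]`. Iterating, `G'` lies in every term of the
lower central series, which reaches `1` because a finite `p`-group is nilpotent.
-/

variable {G}

namespace Subgroup

theorem commutator_top_le_iff_map_le_center {N : Subgroup G} [N.Normal] {H : Subgroup G} :
    ⁅H, ⊤⁆ ≤ N ↔ H.map (QuotientGroup.mk' N) ≤ center (G ⧸ N) := by
  rw [← commutator_top_right_eq_bot_iff_le_center,
    ← map_top_of_surjective _ (QuotientGroup.mk'_surjective N), ← map_commutator,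
    map_eq_bot_iff, QuotientGroup.ker_mk']

theorem commutator_sup_center_top (H : Subgroup G) [H.Normal] :
    ⁅H ⊔ center G, (⊤ : Subgroup G)⁆ = ⁅H, ⊤⁆ := by
  refine le_antisymm ?_ (commutator_mono le_sup_left le_rfl)
  rw [commutator_top_le_iff_map_le_center, map_sup]
  refine sup_le (commutator_top_le_iff_map_le_center.mp le_rfl) ?_
  rw [← commutator_top_le_iff_map_le_center, commutator_center_left]
  exact bot_le

theorem commutator_le_of_isCyclic_quotient {N K : Subgroup G} [N.Normal] [K.Normal]
    [IsCyclic (G ⧸ K)] (hNK : N ≤ K) (hK : ⁅K, ⊤⁆ ≤ N) : _root_.commutator G ≤ N := by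
  rw [← Normal.quotient_commutative_iff_commutator_le]
  refine (QuotientGroup.map N K (MonoidHom.id G) hNK)
    |>.isMulCommutative_of_isCyclic_of_ker_le_center ?_
  rw [QuotientGroup.ker_map N K (MonoidHom.id G) hNK, comap_id]
  exact commutator_top_le_iff_map_le_center.mp hK

theorem le_lowerCentralSeries_of_le_commutator_top {H : Subgroup G} (h : H ≤ ⁅H, ⊤⁆) :
    ∀ n, H ≤ (⊤ : Subgroup G).lowerCentralSeries n
  | 0 => le_top
  | n + 1 => h.trans (commutator_mono (le_lowerCentralSeries_of_le_commutator_top h n) le_rfl)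

theorem eq_bot_of_le_commutator_top [Group.IsNilpotent G] {H : Subgroup G} (h : H ≤ ⁅H, ⊤⁆) :
    H = ⊥ := by
  obtain ⟨n, hn⟩ := nilpotent_iff_lowerCentralSeries.mp ‹_›
  exact le_bot_iff.mp (hn ▸ le_lowerCentralSeries_of_le_commutator_top h n)

end Subgroup

theorem stmt1_general {p : ℕ} [Fact p.Prime] {G : Type*} [Group G] [Finite G]
    (hp : IsPGroup p G) (hna : ¬ ∀ x y : G, Commute x y) :
    ¬ IsCyclic (G ⧸ (commutator G ⊔ Subgroup.center G)) := by
  intro _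
  have := hp.isNilpotent
  have hstable : commutator G ≤ ⁅commutator G, ⊤⁆ :=
    Subgroup.commutator_le_of_isCyclic_quotient
      ((Subgroup.commutator_le_left _ _).trans le_sup_left)
      (Subgroup.commutator_sup_center_top _).le
  have hcomm := (commutator_eq_bot_iff G).mp (Subgroup.eq_bot_of_le_commutator_top hstable)
  exact hna fun x y => hcomm.is_comm.comm x y

/-- A finite non-abelian `p`-group with abelian commutator subgroup
has non-cyclic quotient `G/(G'Z(G))`. -/
theorem stmt1 {p : ℕ} [Fact p.Prime] {G : Type*} [Group G] [Finite G]
    (hp : IsPGroup p G) (hna : ¬ ∀ x y : G, Commute x y)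
    (hG' : IsMulCommutative (commutator G)) :
    ¬ IsCyclic (G ⧸ (commutator G ⊔ Subgroup.center G)) :=
  stmt1_general hp hna
end

section
/- If G is a nonabelian group in which all automorphisms are central (i.e., every automorphism commutes with every inner automorphism), then G is nilpotent of class exactly 2. -/
variable (G : Type*) [Group G]

/-!
Every automorphism is central, in particular every inner one, so `MulAut.conj a` and
`MulAut.conj b` commute. Hence `MulAut.conj ⁅a, b⁆ = ⁅MulAut.conj a, MulAut.conj b⁆ = 1`, i.e. every
commutator is central: `G / Z(G)` is abelian and `Z₂(G) = G`, while `Z₁(G) = Z(G) ≠ G` since `G`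
is nonabelian.
-/

section

open scoped commutatorElement

variable {G}

theorem mem_center_of_conj_eq_one {a : G} (h : MulAut.conj a = 1) : a ∈ Subgroup.center G := by
  refine Subgroup.mem_center_iff.mpr fun g => ?_
  have hg : a * g * a⁻¹ = g := by simpa using DFunLike.congr_fun h g
  rwa [mul_inv_eq_iff_eq_mul, eq_comm] at hg

theorem commutatorElement_mem_center_of_commute_conj {a b : G}
    (h : Commute (MulAut.conj a) (MulAut.conj b)) : ⁅a, b⁆ ∈ Subgroup.center G :=
  mem_center_of_conj_eq_one <| by
    rw [map_commutatorElement, commutatorElement_eq_one_iff_commute]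
    exact h

theorem commute_conj_of_mem_Autcent {α : MulAut G} (hα : α ∈ Autcent G) (b : G) :
    Commute α (MulAut.conj b) :=
  (Subgroup.mem_centralizer_iff.mp hα _ ⟨b, rfl⟩).symm

theorem upperCentralSeries_two_eq_top_of_commutatorElement_mem_center
    (h : ∀ a b : G, ⁅a, b⁆ ∈ Subgroup.center G) : Subgroup.upperCentralSeries G 2 = ⊤ :=
  (Subgroup.eq_top_iff' _).mpr fun a => Subgroup.mem_upperCentralSeries_succ_iff.mpr fun b => by
    rw [Subgroup.upperCentralSeries_one]
    exact h a b

theorem upperCentralSeries_one_ne_top_of_not_commute (h : ¬ ∀ a b : G, Commute a b) :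
    Subgroup.upperCentralSeries G 1 ≠ ⊤ := by
  rw [Subgroup.upperCentralSeries_one, Ne, Subgroup.center_eq_top_iff, isMulCommutative_iff]
  exact h

end

/-- If `G` is a nonabelian group in which every automorphism is central,
then `G` is nilpotent of class exactly 2 (i.e. `Z₂(G) = G` but `Z₁(G) ≠ G`). -/
theorem stmt2 {G : Type*} [Group G]
    (hna : ¬ ∀ x y : G, Commute x y)
    (hall : ∀ α : MulAut G, α ∈ Autcent G) :
    upperCentralSeries G 2 = ⊤ ∧ upperCentralSeries G 1 ≠ ⊤ :=
  ⟨upperCentralSeries_two_eq_top_of_commutatorElement_mem_center fun a b =>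
      commutatorElement_mem_center_of_commute_conj <|
        commute_conj_of_mem_Autcent (hall (MulAut.conj a)) b,
    upperCentralSeries_one_ne_top_of_not_commute hna⟩
end

section
/- For any group G, the group Autcent_Z(G) of central automorphisms of G fixing Z(G) elementwise is isomorphic to Hom(G/(G'Z(G)), Z(G)). -/
/-!
A central automorphism `α` fixing `Z(G)` is `x ↦ x * f x` for `f x = x⁻¹ * α x`, a homomorphism
`G → Z(G)` that kills `G'` because `Z(G)` is abelian and kills `Z(G)` because `α` fixes it.
Conversely, for any `f : G →* Z(G)` vanishing on `Z(G)` the map `x ↦ x * f x` is a central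
automorphism fixing `Z(G)`: since `f (x * g x) = f x`, composing two such maps multiplies the
`f`s, so `x ↦ x * (f x)⁻¹` is its inverse.
-/

variable (G : Type*) [Group G]

open scoped IsMulCommutative

open Subgroup

variable {G}

-- Both sides say that `g⁻¹ * α g` commutes with every `α y`, and `α` is surjective.
theorem MulAut.conj_mul_comm_iff (α : MulAut G) (g : G) :
    MulAut.conj g * α = α * MulAut.conj g ↔ g⁻¹ * α g ∈ center G := by
  rw [mem_center_iff, α.surjective.forall, DFunLike.ext_iff]
  refine forall_congr' fun y => ?_
  simp only [MulAut.mul_apply, MulAut.conj_apply, map_mul, map_inv]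
  constructor <;> intro h
  · calc α y * (g⁻¹ * α g) = g⁻¹ * (g * α y * g⁻¹) * α g := by group
      _ = g⁻¹ * α g * α y := by rw [h]; group
  · calc g * α y * g⁻¹ = g * (α y * (g⁻¹ * α g)) * (α g)⁻¹ := by group
      _ = α g * α y * (α g)⁻¹ := by rw [h]; group

theorem mem_autcent_iff (α : MulAut G) : α ∈ Autcent G ↔ ∀ g : G, g⁻¹ * α g ∈ center G := by
  simp only [Autcent, innAut, mem_centralizer_iff, MonoidHom.coe_range, Set.forall_mem_range,
    MulAut.conj_mul_comm_iff]

def centralEndo (f : G →* center G) : G →* G where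
  toFun x := x * f x
  map_one' := by simp
  map_mul' x y := by
    simp only [map_mul, coe_mul]
    rw [mul_assoc x (f x : G), ← mul_assoc (f x : G) y, ← mem_center_iff.mp (f x).2 y]
    group

@[simp]
theorem centralEndo_apply (f : G →* center G) (x : G) : centralEndo f x = x * f x := rfl

theorem centralEndo_one : centralEndo (1 : G →* center G) = MonoidHom.id G := by
  ext; simp

theorem centralEndo_mul {f : G →* center G} (hf : center G ≤ f.ker) (g : G →* center G) :
    centralEndo (f * g) = (centralEndo f).comp (centralEndo g) := by
  ext x
  have hfg : f (g x : G) = 1 := hf (g x).2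
  simp only [centralEndo_apply, MonoidHom.mul_apply, MonoidHom.comp_apply, map_mul, hfg,
    mul_one, coe_mul, coe_one, mul_assoc]

def centralAut (f : G →* center G) (hf : center G ≤ f.ker) : MulAut G :=
  have hf' : center G ≤ f⁻¹.ker := fun z hz => by simp [MonoidHom.mem_ker.mp (hf hz)]
  MonoidHom.toMulEquiv (centralEndo f) (centralEndo f⁻¹)
    (by rw [← centralEndo_mul hf', inv_mul_cancel, centralEndo_one])
    (by rw [← centralEndo_mul hf, mul_inv_cancel, centralEndo_one])

@[simp]
theorem centralAut_apply (f : G →* center G) (hf : center G ≤ f.ker) (x : G) :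
    centralAut f hf x = x * f x := rfl

theorem centralAut_mem_autcentZ (f : G →* center G) (hf : center G ≤ f.ker) :
    centralAut f hf ∈ AutcentZ G := by
  refine mem_inf.mpr ⟨(mem_autcent_iff _).mpr fun x => ?_, fun z hz => ?_⟩
  · simp
  · simp [MonoidHom.mem_ker.mp (hf hz)]

def centralDisplacement (α : MulAut G) (hα : α ∈ Autcent G) : G →* center G where
  toFun x := ⟨x⁻¹ * α x, (mem_autcent_iff α).mp hα x⟩
  map_one' := by ext; simp
  map_mul' x y := by
    ext
    simp only [map_mul, mul_inv_rev, coe_mul]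
    calc y⁻¹ * x⁻¹ * (α x * α y) = y⁻¹ * (x⁻¹ * α x) * α y := by group
      _ = x⁻¹ * α x * (y⁻¹ * α y) := by
        rw [mem_center_iff.mp ((mem_autcent_iff α).mp hα x) y⁻¹]; group

@[simp]
theorem coe_centralDisplacement_apply (α : MulAut G) (hα : α ∈ Autcent G) (x : G) :
    (centralDisplacement α hα x : G) = x⁻¹ * α x := rfl

local notation "N" => commutator G ⊔ center G

theorem center_le_ker_comp_mk' (φ : G ⧸ N →* center G) :
    center G ≤ (φ.comp (QuotientGroup.mk' N)).ker := fun z hz => by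
  simp [(QuotientGroup.eq_one_iff z).mpr (mem_sup_right hz)]

variable (G) in
def centralAutHom : (G ⧸ N →* center G) →* AutcentZ G where
  toFun φ := ⟨_, centralAut_mem_autcentZ _ (center_le_ker_comp_mk' φ)⟩
  map_one' := by ext; simp
  map_mul' φ ψ := by
    ext x
    exact DFunLike.congr_fun
      (centralEndo_mul (center_le_ker_comp_mk' φ) (ψ.comp (QuotientGroup.mk' N))) x

@[simp]
theorem centralAutHom_apply (φ : G ⧸ N →* center G) (x : G) :
    (centralAutHom G φ : MulAut G) x = x * φ x := rfl

theorem centralAutHom_injective : Function.Injective (centralAutHom G) := by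
  intro φ ψ h
  refine QuotientGroup.monoidHom_ext _ (MonoidHom.ext fun x => Subtype.ext ?_)
  simpa using DFunLike.congr_fun (congrArg Subtype.val h) x

theorem centralAutHom_surjective : Function.Surjective (centralAutHom G) := by
  rintro ⟨α, hα⟩
  obtain ⟨hcent, hfix⟩ := mem_inf.mp hα
  have hker : N ≤ (centralDisplacement α hcent).ker :=
    sup_le (Abelianization.commutator_subset_ker _) fun z hz => by ext; simp [hfix z hz]
  refine ⟨QuotientGroup.lift N _ hker, Subtype.ext (MulEquiv.ext fun x => ?_)⟩
  simp [centralAutHom]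

theorem stmt3_general {G : Type*} [Group G] :
    Nonempty (AutcentZ G ≃*
      ((G ⧸ (commutator G ⊔ Subgroup.center G)) →* Subgroup.center G)) :=
  ⟨(MulEquiv.ofBijective (centralAutHom G)
    ⟨centralAutHom_injective, centralAutHom_surjective⟩).symm⟩

/-- For a finite group `G`, the group of central automorphisms fixing
the center elementwise is isomorphic to `Hom(G/(G'Z(G)), Z(G))`. -/
theorem stmt3 {G : Type*} [Group G] [Finite G] :
    Nonempty (AutcentZ G ≃*
      ((G ⧸ (commutator G ⊔ Subgroup.center G)) →* Subgroup.center G)) :=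
  stmt3_general
end

section
/- Let G be a finite p-group such that Z(G) is not contained in G' and the nilpotence class of G is at least 3. Then G is not of maximal class, |Z(G)| ≥ p², and |G| ≥ p⁵. -/
variable (G : Type*) [Group G]

/-!
In a nilpotent group of class `c ≥ 2` the last nontrivial term `γ_c(G)` of the lower central series
is central and lies in `G'`, so `G' ∩ Z(G) ≠ 1`. As `Z(G) ⊄ G'`, the `p`-group `Z(G)` has a proper
nontrivial subgroup, whence `|Z(G)| ≥ p²`. Moreover a `p`-group `H` of class `c ≥ 2` satisfies
`|H/Z(H)| ≥ p^c`: for `c = 2` because `H/Z(H)` is not cyclic, and in general by induction through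
`H/Z(H)`, whose class is `c - 1`. Hence `|G| ≥ p^(c+2)`, which gives `|G| ≥ p⁵` and `c ≤ n - 2`.
-/

open Subgroup (center)

namespace IsPGroup

variable {p : ℕ} [hp : Fact p.Prime] {G : Type*} [Group G] [Finite G]

theorem prime_le_card [Nontrivial G] (hG : IsPGroup p G) : p ≤ Nat.card G := by
  obtain ⟨k, hk, hcard⟩ := hG.nontrivial_iff_card.mp ‹_›
  exact hcard ▸ Nat.le_self_pow hk.ne' p

theorem sq_le_card_of_not_isCyclic (hG : IsPGroup p G) (h : ¬ IsCyclic G) :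
    p ^ 2 ≤ Nat.card G := by
  obtain ⟨k, hk⟩ := IsPGroup.iff_card.mp hG
  rw [hk]
  refine Nat.pow_le_pow_right hp.out.pos ?_
  by_contra! hk2
  interval_cases k
  · have : Subsingleton G := (Nat.card_eq_one_iff_unique.mp (by simpa using hk)).1
    exact h isCyclic_of_subsingleton
  · exact h (isCyclic_of_prime_card (by simpa using hk))

theorem sq_le_card_of_ne_bot_of_lt (hG : IsPGroup p G) {H K : Subgroup G} (hH : H ≠ ⊥)
    (hHK : H < K) : p ^ 2 ≤ Nat.card K := by
  have : Nontrivial H := H.nontrivial_iff_ne_bot.mpr hH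
  obtain ⟨a, ha, hcardH⟩ := (hG.to_subgroup H).nontrivial_iff_card.mp ‹_›
  obtain ⟨b, hcardK⟩ := IsPGroup.iff_card.mp (hG.to_subgroup K)
  have hlt : Nat.card H < Nat.card K :=
    (Subgroup.card_le_of_le hHK.le).lt_of_ne fun h =>
      hHK.ne (Subgroup.eq_of_le_of_card_ge hHK.le h.ge)
  rw [hcardH, hcardK, Nat.pow_lt_pow_iff_right hp.out.one_lt] at hlt
  exact hcardK ▸ Nat.pow_le_pow_right hp.out.pos (by omega)

end IsPGroup

namespace Group

variable {G : Type*} [Group G]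

theorem center_ne_top_of_two_le_nilpotencyClass [IsNilpotent G] (h : 2 ≤ nilpotencyClass G) :
    center G ≠ ⊤ := by
  rw [Ne, ← Subgroup.upperCentralSeries_one,
    Subgroup.upperCentralSeries_eq_top_iff_nilpotencyClass_le]
  omega

theorem commutator_inf_center_ne_bot [IsNilpotent G] (h : 2 ≤ nilpotencyClass G) :
    commutator G ⊓ center G ≠ ⊥ := by
  set L := (⊤ : Subgroup G).lowerCentralSeries (nilpotencyClass G - 1)
  have hL : L ≠ ⊥ := by
    rw [Ne, Subgroup.lowerCentralSeries_eq_bot_iff_nilpotencyClass_le]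
    omega
  have hL_center : L ≤ center G := by
    rw [← Subgroup.commutator_top_right_eq_bot_iff_le_center, ← Subgroup.lowerCentralSeries_succ,
      Nat.sub_add_cancel (by omega), Subgroup.lowerCentralSeries_nilpotencyClass]
  have hL_commutator : L ≤ commutator G :=
    Subgroup.lowerCentralSeries_antitone _ (by omega : 1 ≤ nilpotencyClass G - 1)
  exact ne_bot_of_le_ne_bot hL (le_inf hL_commutator hL_center)

end Group

theorem IsPGroup.pow_nilpotencyClass_le_card_quotient_center {p : ℕ} [Fact p.Prime]
    {G : Type*} [Group G] [Finite G] (hG : IsPGroup p G) (h : 2 ≤ Group.nilpotencyClass G) :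
    p ^ Group.nilpotencyClass G ≤ Nat.card (G ⧸ center G) := by
  obtain ⟨c, hc⟩ : ∃ c, Group.nilpotencyClass G = c := ⟨_, rfl⟩
  rw [hc] at h ⊢
  induction c, h using Nat.le_induction generalizing G with
  | base =>
    have := hG.isNilpotent
    have hnc : ¬ IsCyclic (G ⧸ center G) := fun _ =>
      Group.center_ne_top_of_two_le_nilpotencyClass hc.ge
        (Subgroup.center_eq_top_iff.mpr (isMulCommutative_of_isCyclic_quotient_center_self G))
    exact (hG.to_quotient _).sq_le_card_of_not_isCyclic hnc
  | succ c hc2 ih =>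
    have hQ : IsPGroup p (G ⧸ center G) := hG.to_quotient _
    have hQ_class : Group.nilpotencyClass (G ⧸ center G) = c := by
      rw [Group.nilpotencyClass_quotient_center, hc, Nat.add_sub_cancel]
    have := hQ.isNilpotent
    have : Nontrivial (G ⧸ center G) := by
      by_contra! hQ_triv
      rw [Group.nilpotencyClass_zero_iff_subsingleton.mpr hQ_triv] at hQ_class
      omega
    have := hQ.center_nontrivial
    calc p ^ (c + 1) = p ^ c * p := pow_succ p c
      _ ≤ Nat.card ((G ⧸ center G) ⧸ center (G ⧸ center G)) * Nat.card (center (G ⧸ center G)) :=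
        Nat.mul_le_mul (ih hQ hQ_class) (hQ.to_subgroup _).prime_le_card
      _ = Nat.card (G ⧸ center G) := (Subgroup.card_eq_card_quotient_mul_card_subgroup _).symm

/-- A finite `p`-group of order `p^n` with `Z(G) ⊄ G'` and nilpotence class
at least 3 is not of maximal class, has `|Z(G)| ≥ p²`, and `|G| ≥ p⁵`. -/
theorem stmt6 {p n : ℕ} [Fact p.Prime] {G : Type*} [Group G] [Finite G]
    [Group.IsNilpotent G]
    (hp : IsPGroup p G) (hcard : Nat.card G = p ^ n)
    (hZ : ¬ Subgroup.center G ≤ commutator G)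
    (hcl : 3 ≤ Group.nilpotencyClass G) :
    Group.nilpotencyClass G ≠ n - 1 ∧
    p ^ 2 ≤ Nat.card (Subgroup.center G) ∧
    p ^ 5 ≤ Nat.card G := by
  set c := Group.nilpotencyClass G
  have hp1 : 1 < p := Fact.out (p := p.Prime) |>.one_lt
  have hZ_card : p ^ 2 ≤ Nat.card (center G) :=
    hp.sq_le_card_of_ne_bot_of_lt (Group.commutator_inf_center_ne_bot (by omega))
      (inf_le_right.lt_of_ne fun h => hZ (h ▸ inf_le_left))
  have hQ_card : p ^ c ≤ Nat.card (G ⧸ center G) :=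
    hp.pow_nilpotencyClass_le_card_quotient_center (by omega)
  have hG_card : p ^ (c + 2) ≤ Nat.card G := by
    rw [Subgroup.card_eq_card_quotient_mul_card_subgroup (center G), pow_add]
    exact Nat.mul_le_mul hQ_card hZ_card
  have hcn : c + 2 ≤ n := by
    rwa [hcard, Nat.pow_le_pow_iff_right hp1] at hG_card
  exact ⟨by omega, hZ_card, (Nat.pow_le_pow_right (by omega) (by omega)).trans hG_card⟩
end

section
/- Let G be a finite p-group of order p⁷ and nilpotence class 4 with Z(G) not contained in G'. Then |G'| < p⁵. -/
/-!
If `|G'| ≥ p⁵` then `G/G'` has order at most `p²`. A central element `z ∉ G'` then leaves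
`G / ⟨z⟩G'` of order at most `p`, so `G = ⟨z⟩G'⟨y⟩` for a single `y`. Modulo `γ₃(G)` both `z` and
`G'` are central, so `G/γ₃(G)` is generated by its centre and the abelian subgroup `⟨y⟩`, hence
abelian: `G' = γ₃(G)`. In a nilpotent group this forces `G' = 1`, contradicting `|G'| ≥ p⁵`.
-/

variable (G : Type*) [Group G]

namespace Subgroup

variable {G}

theorem index_dvd_pow_of_pow_le_card {p k m : ℕ} (hp : p.Prime) (hG : Nat.card G = p ^ (k + m))
    {H : Subgroup G} (hH : p ^ m ≤ Nat.card H) : H.index ∣ p ^ k := by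
  have hmul : H.index * Nat.card H = p ^ (k + m) := by rw [index_mul_card, hG]
  obtain ⟨i, -, hi⟩ := (Nat.dvd_prime_pow hp).mp (Dvd.intro _ hmul)
  have : p ^ (i + m) ≤ p ^ (k + m) := by
    rw [pow_add, ← hmul, hi]
    exact Nat.mul_le_mul_left _ hH
  rw [hi]
  exact pow_dvd_pow p (by have := (Nat.pow_le_pow_iff_right hp.one_lt).mp this; omega)

theorem index_dvd_pow_of_lt {p n : ℕ} (hp : p.Prime) {H K : Subgroup G} (hHK : H < K)
    (hH : H.index ∣ p ^ (n + 1)) : K.index ∣ p ^ n := by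
  have hrel := relIndex_mul_index hHK.le
  obtain ⟨i, -, hi⟩ := (Nat.dvd_prime_pow hp).mp (dvd_trans (Dvd.intro _ hrel) hH)
  have hi0 : i ≠ 0 := by
    rintro rfl
    exact hHK.not_ge (relIndex_eq_one.mp (by simpa using hi))
  have : p * K.index ∣ p * p ^ n := by
    rw [← pow_succ']
    refine dvd_trans (mul_dvd_mul_right (?_ : p ∣ H.relIndex K) _) (hrel ▸ hH)
    exact hi ▸ dvd_pow_self p hi0
  exact (Nat.mul_dvd_mul_iff_left hp.pos).mp this

theorem exists_sup_zpowers_eq_top {p : ℕ} (hp : p.Prime) {K : Subgroup G} (hK : K.index ∣ p) :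
    ∃ y : G, K ⊔ zpowers y = ⊤ := by
  by_cases hKtop : K = ⊤
  · exact ⟨1, by simp [hKtop]⟩
  obtain ⟨y, hy⟩ := SetLike.exists_not_mem_of_ne_top K hKtop
  refine ⟨y, index_eq_one.mp (Nat.dvd_one.mp ?_)⟩
  refine index_dvd_pow_of_lt (n := 0) hp (le_sup_left.lt_of_not_ge fun h => hy (h ?_))
    (by simpa using hK)
  exact mem_sup_right (mem_zpowers y)

theorem isMulCommutative_of_sup_center_eq_top {A : Subgroup G} [IsMulCommutative A]
    (h : A ⊔ center G = ⊤) : IsMulCommutative G := by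
  have hA : (A : Set G) ⊆ center G := by
    rw [← centralizer_eq_top_iff_subset, eq_top_iff, ← h]
    exact sup_le (le_centralizer A) (center_le_centralizer (A : Set G))
  rw [← center_eq_top_iff, ← h, sup_eq_right.mpr (show A ≤ center G from hA)]

theorem map_mk'_le_center_iff {N H : Subgroup G} [N.Normal] :
    H.map (QuotientGroup.mk' N) ≤ center (G ⧸ N) ↔ ⁅H, ⊤⁆ ≤ N := by
  rw [← commutator_top_right_eq_bot_iff_le_center,
    ← map_top_of_surjective _ (QuotientGroup.mk'_surjective N), ← map_commutator,
    map_eq_bot_iff, QuotientGroup.ker_mk']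

theorem commutator_le_of_sup_eq_top {N K A : Subgroup G} [N.Normal] [IsMulCommutative A]
    (hK : K.map (QuotientGroup.mk' N) ≤ center (G ⧸ N)) (h : K ⊔ A = ⊤) :
    _root_.commutator G ≤ N := by
  rw [← Normal.quotient_commutative_iff_commutator_le]
  refine isMulCommutative_of_sup_center_eq_top (A := A.map (QuotientGroup.mk' N)) ?_
  rw [eq_top_iff, ← map_top_of_surjective _ (QuotientGroup.mk'_surjective N), ← h, map_sup,
    sup_comm]
  exact sup_le_sup_left hK _

theorem commutator_le_lowerCentralSeries_two {z : G} (hz : z ∈ center G) {A : Subgroup G}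
    [IsMulCommutative A] (h : zpowers z ⊔ _root_.commutator G ⊔ A = ⊤) :
    _root_.commutator G ≤ lowerCentralSeries ⊤ 2 := by
  refine commutator_le_of_sup_eq_top ?_ h
  rw [map_sup]
  refine sup_le (map_mk'_le_center_iff.mpr ?_) (map_mk'_le_center_iff.mpr le_rfl)
  exact (commutator_top_right_eq_bot_iff_le_center.mpr (zpowers_le.mpr hz)).le.trans bot_le

end Subgroup

theorem Group.commutator_eq_bot_of_le_lowerCentralSeries_two {G : Type*} [Group G]
    [Group.IsNilpotent G] (h : commutator G ≤ Subgroup.lowerCentralSeries ⊤ 2) :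
    commutator G = ⊥ := by
  have hle : ∀ n, commutator G ≤ Subgroup.lowerCentralSeries ⊤ (n + 1) := by
    intro n
    induction n with
    | zero => rfl
    | succ n ih => exact h.trans (Subgroup.commutator_mono ih le_rfl)
  obtain ⟨n, hn⟩ := Subgroup.nilpotent_iff_lowerCentralSeries.mp ‹Group.IsNilpotent G›
  exact le_bot_iff.mp (hn ▸ (hle n).trans (Subgroup.lowerCentralSeries_antitone _ n.le_succ))

theorem stmt13_general {p : ℕ} [Fact p.Prime] {G : Type*} [Group G]
    [Group.IsNilpotent G]
    (hcard : Nat.card G = p ^ 7)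
    (hZ : ¬ Subgroup.center G ≤ commutator G) :
    Nat.card (commutator G) < p ^ 5 := by
  have hp : p.Prime := Fact.out
  by_contra! hlarge
  obtain ⟨z, hz, hzG'⟩ := SetLike.not_le_iff_exists.mp hZ
  have hG' : (commutator G).index ∣ p ^ 2 :=
    Subgroup.index_dvd_pow_of_pow_le_card hp hcard hlarge
  have hzG'_index : (Subgroup.zpowers z ⊔ commutator G).index ∣ p ^ 1 := by
    refine Subgroup.index_dvd_pow_of_lt hp (le_sup_right.lt_of_not_ge fun h => hzG' ?_) hG'
    exact h (Subgroup.mem_sup_left (Subgroup.mem_zpowers z))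
  obtain ⟨y, hy⟩ := Subgroup.exists_sup_zpowers_eq_top hp (by simpa using hzG'_index)
  rw [Group.commutator_eq_bot_of_le_lowerCentralSeries_two
    (Subgroup.commutator_le_lowerCentralSeries_two hz hy), Subgroup.card_bot] at hlarge
  exact hlarge.not_gt (Nat.one_lt_pow (by norm_num) hp.one_lt)

/-- A finite `p`-group of order `p⁷` and class 4 with `Z(G) ⊄ G'`
has `|G'| < p⁵`. -/
theorem stmt13 {p : ℕ} [Fact p.Prime] {G : Type*} [Group G] [Finite G]
    [Group.IsNilpotent G]
    (hp : IsPGroup p G) (hcard : Nat.card G = p ^ 7)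
    (hcl : Group.nilpotencyClass G = 4)
    (hZ : ¬ Subgroup.center G ≤ commutator G) :
    Nat.card (commutator G) < p ^ 5 :=
  stmt13_general hcard hZ
end

section
/- If H is a finite group with |H/Z(H)| = p², then |H'| ≤ p. -/
/-!
Since `|H/Z(H)| = p²`, the quotient `H/Z(H)` is abelian, so commutators are central and
`(x, y) ↦ ⁅x, y⁆` is multiplicative in each variable with `Z(H)` in both kernels. The
quotient is not cyclic (else `H` would be abelian), so it has exponent `p` and is generated by
the images of two elements `a`, `b`. Bimultiplicativity then puts every commutator into
`⟨⁅a, b⁆⟩`, and `⁅a, b⁆ ^ p = ⁅a ^ p, b⁆ = 1` because `a ^ p` is central.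
-/

variable (G : Type*) [Group G]

open Subgroup
open scoped commutatorElement

variable {G}

theorem MonoidHom.range_eq_closure_image_of_le_ker {M : Type*} [Group M]
    {N : Subgroup G} [N.Normal] (f : G →* M) (hf : N ≤ f.ker) {s : Set G}
    (hs : closure (((↑) : G → G ⧸ N) '' s) = ⊤) : f.range = closure (f '' s) :=
  calc f.range = ((QuotientGroup.lift N f hf).comp (QuotientGroup.mk' N)).range := rfl
    _ = (closure (((↑) : G → G ⧸ N) '' s)).map (QuotientGroup.lift N f hf) := by
      rw [range_comp, QuotientGroup.range_mk', hs]
    _ = closure (f '' s) := by rw [map_closure, Set.image_image]; rfl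

theorem card_quotient_center_eq_one_of_isCyclic [IsCyclic (G ⧸ center G)] :
    Nat.card (G ⧸ center G) = 1 := by
  have := isMulCommutative_of_isCyclic_quotient_center_self G
  rw [center_eq_top]
  exact index_top

theorem exists_closure_pair_eq_top_of_exponent_eq_prime {Q : Type*} [Group Q] {p : ℕ}
    (hp : p.Prime) (hQ : Nat.card Q = p ^ 2) (hexp : Monoid.exponent Q = p) :
    ∃ x y : Q, closure {x, y} = ⊤ := by
  have : Finite Q := Nat.finite_of_card_ne_zero (hQ ▸ pow_ne_zero 2 hp.ne_zero)
  have : Nontrivial Q := Finite.one_lt_card_iff_nontrivial.mp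
    (hQ ▸ Nat.one_lt_pow two_ne_zero hp.one_lt)
  obtain ⟨x, hx⟩ := exists_ne (1 : Q)
  have hindex : (zpowers x).index = p := by
    refine Nat.eq_of_mul_eq_mul_right hp.pos ?_
    rw [← sq, ← hQ, ← index_mul_card, Nat.card_zpowers,
      (Monoid.exponent_eq_prime_iff hp).mp hexp x hx]
  obtain ⟨y, hy⟩ := SetLike.exists_not_mem_of_ne_top (zpowers x) fun h => by
    rw [h, index_top] at hindex
    exact hp.ne_one hindex.symm
  refine ⟨x, y, ?_⟩
  have hle : zpowers x ≤ closure {x, y} := zpowers_le.mpr (subset_closure (by simp))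
  have hmul := relIndex_mul_index hle
  rw [hindex] at hmul
  rcases hp.eq_one_or_self_of_dvd _ (Dvd.intro_left _ hmul) with h | h
  · exact index_eq_one.mp h
  · rw [h, Nat.mul_eq_right hp.ne_zero, relIndex_eq_one] at hmul
    exact absurd (hmul (subset_closure (by simp))) hy

theorem commutatorElement_mem_center (hG : commutator G ≤ center G) (x y : G) :
    ⁅x, y⁆ ∈ center G :=
  hG (commutator_mem_commutator (mem_top x) (mem_top y))

def commutatorLeftHom (hG : commutator G ≤ center G) (x : G) : G →* G where
  toFun y := ⁅x, y⁆
  map_one' := commutatorElement_one_right x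
  map_mul' y z := by
    have hz := mem_center_iff.mp (commutatorElement_mem_center hG x z) y
    rw [commutatorElement_mul_right_eq_mul_conj, mul_assoc _ y, hz, ← mul_assoc,
      mul_inv_cancel_right]

def commutatorRightHom (hG : commutator G ≤ center G) (y : G) : G →* G where
  toFun x := ⁅x, y⁆
  map_one' := commutatorElement_one_left y
  map_mul' x z := by
    have hz := mem_center_iff.mp (commutatorElement_mem_center hG z y)
    rw [commutatorElement_mul_left_eq_conj_mul, hz x, mul_inv_cancel_right, hz]

theorem center_le_ker_commutatorLeftHom (hG : commutator G ≤ center G) (x : G) :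
    center G ≤ (commutatorLeftHom hG x).ker := fun _ hz =>
  commutatorElement_eq_one_iff_commute.mpr (mem_center_iff.mp hz x)

theorem center_le_ker_commutatorRightHom (hG : commutator G ≤ center G) (y : G) :
    center G ≤ (commutatorRightHom hG y).ker := fun _ hz =>
  commutatorElement_eq_one_iff_commute.mpr (mem_center_iff.mp hz y).symm

theorem commutator_le_of_commutatorElement_mem (hG : commutator G ≤ center G) {s : Set G}
    (hs : closure (((↑) : G → G ⧸ center G) '' s) = ⊤) {S : Subgroup G}
    (hS : ∀ x ∈ s, ∀ y ∈ s, ⁅x, y⁆ ∈ S) : commutator G ≤ S := by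
  have hright : ∀ g, ∀ y ∈ s, ⁅g, y⁆ ∈ S := fun g y hy => by
    have : (commutatorRightHom hG y).range ≤ S := by
      rw [(commutatorRightHom hG y).range_eq_closure_image_of_le_ker
        (center_le_ker_commutatorRightHom hG y) hs, closure_le]
      rintro _ ⟨x, hx, rfl⟩
      exact hS x hx y hy
    exact this ⟨g, rfl⟩
  rw [commutator_def, commutator_le]
  intro g _ h _
  have : (commutatorLeftHom hG g).range ≤ S := by
    rw [(commutatorLeftHom hG g).range_eq_closure_image_of_le_ker
      (center_le_ker_commutatorLeftHom hG g) hs, closure_le]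
    rintro _ ⟨y, hy, rfl⟩
    exact hright g y hy
  exact this ⟨h, rfl⟩

theorem commutator_le_zpowers_commutatorElement (hG : commutator G ≤ center G) {a b : G}
    (hab : closure {(a : G ⧸ center G), (b : G ⧸ center G)} = ⊤) :
    commutator G ≤ zpowers ⁅a, b⁆ := by
  refine commutator_le_of_commutatorElement_mem hG (s := {a, b}) (by rwa [Set.image_pair]) ?_
  simp only [Set.mem_insert_iff, Set.mem_singleton_iff]
  rintro x (rfl | rfl) y (rfl | rfl)
  · simp
  · exact mem_zpowers _
  · simpa only [commutatorElement_inv] using inv_mem (mem_zpowers ⁅y, x⁆)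
  · simp

theorem commutatorElement_pow_eq_one (hG : commutator G ≤ center G) {a : G} (b : G) {n : ℕ}
    (ha : (a : G ⧸ center G) ^ n = 1) : ⁅a, b⁆ ^ n = 1 := by
  have han : a ^ n ∈ center G := by rwa [← QuotientGroup.eq_one_iff, QuotientGroup.mk_pow]
  calc ⁅a, b⁆ ^ n = commutatorRightHom hG b (a ^ n) := 
      (map_pow (commutatorRightHom hG b) a n).symm
    _ = 1 := center_le_ker_commutatorRightHom hG b han

theorem stmt17_general {p : ℕ} (hp : p.Prime) {H : Type*} [Group H]
    (hc : Nat.card (H ⧸ Subgroup.center H) = p ^ 2) :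
    Nat.card (commutator H) ≤ p := by
  have : Fact p.Prime := ⟨hp⟩
  have hcomm : commutator H ≤ center H :=
    Subgroup.Normal.quotient_commutative_iff_commutator_le.mp
      (IsPGroup.isMulCommutative_of_card_eq_prime_sq hc)
  have hexp : Monoid.exponent (H ⧸ center H) = p := by
    refine (not_isCyclic_iff_exponent_eq_prime hp hc).mp fun _ => ?_
    exact (Nat.one_lt_pow two_ne_zero hp.one_lt).ne'
      (hc.symm.trans card_quotient_center_eq_one_of_isCyclic)
  obtain ⟨x, y, hxy⟩ := exists_closure_pair_eq_top_of_exponent_eq_prime hp hc hexp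
  obtain ⟨a, rfl⟩ := QuotientGroup.mk_surjective x
  obtain ⟨b, rfl⟩ := QuotientGroup.mk_surjective y
  have hcp : ⁅a, b⁆ ^ p = 1 :=
    commutatorElement_pow_eq_one hcomm b (hexp ▸ Monoid.pow_exponent_eq_one _)
  have : Finite (zpowers ⁅a, b⁆) :=
    (isOfFinOrder_iff_pow_eq_one.mpr ⟨p, hp.pos, hcp⟩).finite_zpowers.to_subtype
  calc Nat.card (commutator H) ≤ Nat.card (zpowers ⁅a, b⁆) :=
        card_le_of_le (commutator_le_zpowers_commutatorElement hcomm hxy)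
    _ = orderOf ⁅a, b⁆ := Nat.card_zpowers _
    _ ≤ p := orderOf_le_of_pow_eq_one hp.pos hcp

/-- If `H` is a finite group with `|H/Z(H)| = p²`, then `|H'| ≤ p`. -/
theorem stmt17 {p : ℕ} (hp : p.Prime) {H : Type*} [Group H] [Finite H]
    (hc : Nat.card (H ⧸ Subgroup.center H) = p ^ 2) :
    Nat.card (commutator H) ≤ p :=
  stmt17_general hp hc
end
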